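/- For every 3×3 matrix A with natural-number entries all of whose row sums and column sums equal 3, the pair of invariants (c₁, c₂) = (Tr(A), (1/2)·Tr(A² + A)) takes one of exactly the following 16 values: (9,18), (7,13), (5,12), (3,15), (6,9), (5,9), (4,7), (3,9), (2,9), (3,3), (3,6), (2,6), (1,4), (1,7), (0,0), (0,6); and two such matrices are permutation-conjugate if and only if they have the same pair of invariants. -/

import Mathlib

/-
Conjugating by a permutation matrix permutes rows and columns simultaneously, so it preserves
`Tr A` and `Tr (A²)`. Conversely, a 3×3 matrix with all line sums 3 is determined by its top-left
2×2 block, whose entries lie in `{0, …, 3}`; running through these 256 blocks shows that every such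
matrix is conjugate to one of 16 representatives, singled out by the pair of invariants.
-/

/-- The permutation matrix of a permutation `σ` (entries in `ℕ`). -/
def permMat {n : Type*} [DecidableEq n] (σ : Equiv.Perm n) : Matrix n n ℕ :=
  fun i j => if σ j = i then 1 else 0

/-- Two square ℕ-valued matrices are permutation-conjugate if `T * A * T⁻¹ = B`
for some permutation matrix `T`, equivalently `T * A = B * T`. -/
def PermConj {n : Type*} [Fintype n] [DecidableEq n] (A B : Matrix n n ℕ) : Prop :=
  ∃ σ : Equiv.Perm n, permMat σ * A = B * permMat σ

open Matrix

theorem Matrix.trace_reindex_self {n R : Type*} [Fintype n] [AddCommMonoid R] (σ : Equiv.Perm n)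
    (A : Matrix n n R) : trace (reindex σ σ A) = trace A :=
  σ.symm.sum_comp (diag A)

theorem permMat_eq_toMatrix_toPEquiv {n : Type*} [DecidableEq n] (σ : Equiv.Perm n) :
    permMat σ = σ.symm.toPEquiv.toMatrix := by
  ext i j
  simp only [permMat, PEquiv.toMatrix_apply, Equiv.toPEquiv_apply, Option.mem_def, Option.some_inj,
    Equiv.symm_apply_eq, @eq_comm _ i]

section PermConj

variable {n : Type*} [Fintype n] [DecidableEq n]

theorem permConj_iff_exists_reindex {A B : Matrix n n ℕ} :
    PermConj A B ↔ ∃ σ : Equiv.Perm n, reindexAlgEquiv ℕ ℕ σ A = B := by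
  simp only [PermConj, permMat_eq_toMatrix_toPEquiv, PEquiv.toMatrix_toPEquiv_mul,
    PEquiv.mul_toMatrix_toPEquiv, coe_reindexAlgEquiv, reindex_apply, Equiv.symm_symm]
  refine exists_congr fun σ => ⟨fun h => ?_, fun h => ?_⟩
  · simpa using congrArg (submatrix · id σ.symm) h
  · subst h
    simp

theorem permConj_equivalence : Equivalence (PermConj (n := n)) := by
  refine ⟨fun A => ?_, fun h => ?_, fun h h' => ?_⟩ <;> simp only [permConj_iff_exists_reindex] at *
  · exact ⟨1, congrArg (· A) (reindexAlgEquiv_refl ℕ ℕ)⟩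
  · obtain ⟨σ, rfl⟩ := h
    exact ⟨σ.symm, by rw [← symm_reindexAlgEquiv, AlgEquiv.symm_apply_apply]⟩
  · obtain ⟨σ, rfl⟩ := h
    obtain ⟨τ, rfl⟩ := h'
    exact ⟨σ.trans τ, by rw [← reindexAlgEquiv_trans_reindexAlgEquiv, AlgEquiv.trans_apply]⟩

def invariants (A : Matrix n n ℕ) : ℕ × ℕ := (trace A, trace (A ^ 2 + A))

theorem invariants_eq_of_permConj {A B : Matrix n n ℕ} (h : PermConj A B) :
    invariants A = invariants B := by
  obtain ⟨σ, rfl⟩ := permConj_iff_exists_reindex.1 h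
  rw [invariants, invariants, ← map_pow, ← map_add, coe_reindexAlgEquiv, trace_reindex_self,
    trace_reindex_self]

end PermConj

def HasLineSums {n : Type*} [Fintype n] (k : ℕ) (A : Matrix n n ℕ) : Prop :=
  ∀ i, (∑ j, A i j = k) ∧ (∑ j, A j i = k)

instance {n : Type*} [Fintype n] (k : ℕ) (A : Matrix n n ℕ) : Decidable (HasLineSums k A) :=
  inferInstanceAs (Decidable (∀ _, _ ∧ _))

theorem HasLineSums.le {n : Type*} [Fintype n] {k : ℕ} {A : Matrix n n ℕ} (h : HasLineSums k A)
    (i j : n) : A i j ≤ k :=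
  (h i).1 ▸ Finset.single_le_sum (fun _ _ => Nat.zero_le _) (Finset.mem_univ j)

def ofTopLeftBlock (k a b c d : ℕ) : Matrix (Fin 3) (Fin 3) ℕ :=
  !![a, b, k - a - b; c, d, k - c - d; k - a - c, k - b - d, a + b + c + d - k]

theorem HasLineSums.eq_ofTopLeftBlock {k : ℕ} {A : Matrix (Fin 3) (Fin 3) ℕ}
    (h : HasLineSums k A) : A = ofTopLeftBlock k (A 0 0) (A 0 1) (A 1 0) (A 1 1) := by
  have h0 := h 0
  have h1 := h 1
  have h2 := h 2
  simp only [Fin.sum_univ_three] at h0 h1 h2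
  ext i j
  fin_cases i <;> fin_cases j <;>
    simp only [Fin.reduceFinMk, Fin.zero_eta, Fin.mk_one, Fin.isValue, ofTopLeftBlock, of_apply,
      cons_val', cons_val, cons_val_zero, cons_val_one, cons_val_fin_one] <;>
    omega

def invariantPairs : Finset (ℕ × ℕ) :=
  {(9, 2 * 18), (7, 2 * 13), (5, 2 * 12), (3, 2 * 15),
    (6, 2 * 9), (5, 2 * 9), (4, 2 * 7), (3, 2 * 9), (2, 2 * 9),
    (3, 2 * 3), (3, 2 * 6), (2, 2 * 6), (1, 2 * 4), (1, 2 * 7),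
    (0, 2 * 0), (0, 2 * 6)}

-- One representative of each class, indexed by its pair of invariants `(c₁, 2 c₂)`.
def normalForm : ℕ × ℕ → Matrix (Fin 3) (Fin 3) ℕ
  | (9, 36) => !![3,0,0; 0,3,0; 0,0,3]
  | (7, 26) => !![2,0,1; 0,3,0; 1,0,2]
  | (5, 24) => !![1,0,2; 0,3,0; 2,0,1]
  | (3, 30) => !![0,0,3; 0,3,0; 3,0,0]
  | (6, 18) => !![2,0,1; 1,2,0; 0,1,2]
  | (5, 18) => !![1,1,1; 1,2,0; 1,0,2]
  | (4, 14) => !![1,0,2; 1,2,0; 1,1,1]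
  | (3, 18) => !![0,1,2; 1,2,0; 2,0,1]
  | (2, 18) => !![0,0,3; 1,2,0; 2,1,0]
  | (3, 6)  => !![1,0,2; 2,1,0; 0,2,1]
  | (3, 12) => !![1,1,1; 1,1,1; 1,1,1]
  | (2, 12) => !![0,1,2; 2,1,0; 1,1,1]
  | (1, 8)  => !![0,0,3; 2,1,0; 1,2,0]
  | (1, 14) => !![0,1,2; 1,1,1; 2,1,0]
  | (0, 0)  => !![0,0,3; 3,0,0; 0,3,0]
  | (0, 12) => !![0,1,2; 2,0,1; 1,2,0]
  | _ => 0

theorem classification_ofTopLeftBlock : ∀ a b c d : Fin 4,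
    HasLineSums 3 (ofTopLeftBlock 3 a b c d) →
      invariants (ofTopLeftBlock 3 a b c d) ∈ invariantPairs ∧
        ∃ σ : Equiv.Perm (Fin 3), reindex σ σ (ofTopLeftBlock 3 a b c d) =
          normalForm (invariants (ofTopLeftBlock 3 a b c d)) := by
  decide

theorem classification {A : Matrix (Fin 3) (Fin 3) ℕ} (hA : HasLineSums 3 A) :
    invariants A ∈ invariantPairs ∧ PermConj A (normalForm (invariants A)) := by
  have key := classification_ofTopLeftBlock ⟨A 0 0, Nat.lt_succ_of_le (hA.le 0 0)⟩
    ⟨A 0 1, Nat.lt_succ_of_le (hA.le 0 1)⟩ ⟨A 1 0, Nat.lt_succ_of_le (hA.le 1 0)⟩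
    ⟨A 1 1, Nat.lt_succ_of_le (hA.le 1 1)⟩
  rw [← hA.eq_ofTopLeftBlock] at key
  exact ⟨(key hA).1, permConj_iff_exists_reindex.2 (key hA).2⟩

/-- for every 3×3 ℕ-matrix with all row and column sums equal to
3, the pair `(c₁, c₂) = (Tr A, ½·Tr(A² + A))` takes exactly one of the 16
listed values (recorded here via `Tr(A² + A) = 2·c₂`), and two such matrices
are permutation-conjugate iff they have the same pair of invariants. -/
theorem invariant_pairs_3x3 :
    (∀ A : Matrix (Fin 3) (Fin 3) ℕ,
      (∀ i, (∑ j, A i j = 3) ∧ (∑ j, A j i = 3)) →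
      (Matrix.trace A, Matrix.trace (A ^ 2 + A)) ∈
        ({(9, 2 * 18), (7, 2 * 13), (5, 2 * 12), (3, 2 * 15),
          (6, 2 * 9), (5, 2 * 9), (4, 2 * 7), (3, 2 * 9), (2, 2 * 9),
          (3, 2 * 3), (3, 2 * 6), (2, 2 * 6), (1, 2 * 4), (1, 2 * 7),
          (0, 2 * 0), (0, 2 * 6)} : Finset (ℕ × ℕ))) ∧
    (∀ A B : Matrix (Fin 3) (Fin 3) ℕ,
      (∀ i, (∑ j, A i j = 3) ∧ (∑ j, A j i = 3)) →
      (∀ i, (∑ j, B i j = 3) ∧ (∑ j, B j i = 3)) →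
      (PermConj A B ↔
        (Matrix.trace A = Matrix.trace B ∧
          Matrix.trace (A ^ 2 + A) = Matrix.trace (B ^ 2 + B)))) := by
  refine ⟨fun A hA => (classification hA).1, fun A B hA hB => ⟨fun h => ?_, fun h => ?_⟩⟩
  · exact Prod.ext_iff.1 (invariants_eq_of_permConj h)
  · have hAB : invariants A = invariants B := Prod.ext h.1 h.2
    exact permConj_equivalence.trans (classification hA).2
      (hAB ▸ permConj_equivalence.symm (classification hB).2)
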